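/- With D as in the context, the map Q_0(ρ) = τ_A ⊗ tr_{AB}(ρ) ⊗ τ_B is the spectral projection of D onto its kernel: Q_0² = Q_0, D∘Q_0 = Q_0∘D = 0, and ker D = range Q_0. -/
import Mathlib


open Matrix
open scoped ComplexOrder

/-- `P(ρ) = τ_A ⊗ tr_A(ρ)` on `B(H_A ⊗ H_C ⊗ H_B)`. -/
noncomputable def resetA {A C B : Type*} [Fintype A]
    (τA : Matrix A A ℂ) (ρ : Matrix (A × C × B) (A × C × B) ℂ) :
    Matrix (A × C × B) (A × C × B) ℂ :=
  Matrix.of fun p q => τA p.1 q.1 * ∑ x, ρ (x, p.2) (x, q.2)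

/-- `Q(ρ) = tr_B(ρ) ⊗ τ_B` on `B(H_A ⊗ H_C ⊗ H_B)`. -/
noncomputable def resetB {A C B : Type*} [Fintype B]
    (τB : Matrix B B ℂ) (ρ : Matrix (A × C × B) (A × C × B) ℂ) :
    Matrix (A × C × B) (A × C × B) ℂ :=
  Matrix.of fun p q => (∑ y, ρ (p.1, p.2.1, y) (q.1, q.2.1, y)) * τB p.2.2 q.2.2


/-- `Q_0(ρ) = τ_A ⊗ tr_{AB}(ρ) ⊗ τ_B`. -/
noncomputable def projQ0 {A C B : Type*} [Fintype A] [Fintype B]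
    (τA : Matrix A A ℂ) (τB : Matrix B B ℂ)
    (ρ : Matrix (A × C × B) (A × C × B) ℂ) : Matrix (A × C × B) (A × C × B) ℂ :=
  Matrix.of fun p q =>
    τA p.1 q.1 * (∑ x, ∑ y, ρ (x, p.2.1, y) (x, q.2.1, y)) * τB p.2.2 q.2.2

/-- The reset dissipator. -/
noncomputable def resetD {A C B : Type*} [Fintype A] [Fintype B]
    (γA γB : ℝ) (τA : Matrix A A ℂ) (τB : Matrix B B ℂ)
    (ρ : Matrix (A × C × B) (A × C × B) ℂ) : Matrix (A × C × B) (A × C × B) ℂ :=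
  γA • (resetA τA ρ - ρ) + γB • (resetB τB ρ - ρ)

set_option linter.unusedSectionVars false

section aux
variable {A C B : Type*} [Fintype A] [Fintype B]
variable (τA : Matrix A A ℂ) (τB : Matrix B B ℂ)
variable (ρ σ : Matrix (A × C × B) (A × C × B) ℂ)

lemma resetA_add : resetA τA (ρ + σ) = resetA τA ρ + resetA τA σ := by
  funext p q
  simp [resetA, Finset.sum_add_distrib, mul_add]

lemma resetA_smul (r : ℝ) : resetA τA (r • ρ) = r • resetA τA ρ := by
  funext p q
  simp only [resetA, Matrix.of_apply, Matrix.smul_apply, Complex.real_smul]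
  rw [← Finset.mul_sum]; ring

lemma resetA_sub : resetA τA (ρ - σ) = resetA τA ρ - resetA τA σ := by
  funext p q
  simp [resetA, Finset.sum_sub_distrib, mul_sub]

lemma resetB_add : resetB τB (ρ + σ) = resetB τB ρ + resetB τB σ := by
  funext p q
  simp [resetB, Finset.sum_add_distrib, add_mul]

lemma resetB_smul (r : ℝ) : resetB τB (r • ρ) = r • resetB τB ρ := by
  funext p q
  simp only [resetB, Matrix.of_apply, Matrix.smul_apply, Complex.real_smul]
  rw [← Finset.mul_sum]; ring

lemma resetB_sub : resetB τB (ρ - σ) = resetB τB ρ - resetB τB σ := by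
  funext p q
  simp [resetB, Finset.sum_sub_distrib, sub_mul]

lemma resetA_resetA (hτAtr : τA.trace = 1) :
    resetA τA (resetA τA ρ) = resetA τA ρ := by
  have h1 : (∑ x, τA x x) = (1 : ℂ) := by simpa [Matrix.trace, Matrix.diag] using hτAtr
  funext p q
  simp only [resetA, Matrix.of_apply]
  rw [← Finset.sum_mul, h1, one_mul]

lemma resetB_resetB (hτBtr : τB.trace = 1) :
    resetB τB (resetB τB ρ) = resetB τB ρ := by
  have h2 : (∑ y, τB y y) = (1 : ℂ) := by simpa [Matrix.trace, Matrix.diag] using hτBtr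
  funext p q
  simp only [resetB, Matrix.of_apply]
  rw [← Finset.mul_sum, h2, mul_one]

lemma resetA_resetB : resetA τA (resetB τB ρ) = projQ0 τA τB ρ := by
  funext p q
  simp only [resetA, resetB, projQ0, Matrix.of_apply]
  rw [← Finset.sum_mul, ← mul_assoc]

lemma resetB_resetA : resetB τB (resetA τA ρ) = projQ0 τA τB ρ := by
  funext p q
  simp only [resetA, resetB, projQ0, Matrix.of_apply]
  rw [← Finset.mul_sum, Finset.sum_comm, mul_assoc]

lemma resetA_projQ0 (hτAtr : τA.trace = 1) :
    resetA τA (projQ0 τA τB ρ) = projQ0 τA τB ρ := by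
  have h1 : (∑ x, τA x x) = (1 : ℂ) := by simpa [Matrix.trace, Matrix.diag] using hτAtr
  funext p q
  simp only [resetA, projQ0, Matrix.of_apply]
  rw [← Finset.sum_mul, ← Finset.sum_mul, h1, one_mul, ← mul_assoc]

lemma resetB_projQ0 (hτBtr : τB.trace = 1) :
    resetB τB (projQ0 τA τB ρ) = projQ0 τA τB ρ := by
  have h2 : (∑ y, τB y y) = (1 : ℂ) := by simpa [Matrix.trace, Matrix.diag] using hτBtr
  funext p q
  simp only [resetB, projQ0, Matrix.of_apply]
  rw [← Finset.mul_sum, h2, mul_one]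

lemma projQ0_resetA (hτAtr : τA.trace = 1) :
    projQ0 τA τB (resetA τA ρ) = projQ0 τA τB ρ := by
  rw [← resetA_resetB, resetB_resetA, resetA_projQ0 _ _ _ hτAtr]

lemma projQ0_resetB (hτBtr : τB.trace = 1) :
    projQ0 τA τB (resetB τB ρ) = projQ0 τA τB ρ := by
  rw [← resetB_resetA, resetA_resetB, resetB_projQ0 _ _ _ hτBtr]

lemma projQ0_projQ0 (hτAtr : τA.trace = 1) (hτBtr : τB.trace = 1) :
    projQ0 τA τB (projQ0 τA τB ρ) = projQ0 τA τB ρ := by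
  rw [← resetA_resetB, resetB_projQ0 _ _ _ hτBtr, resetA_projQ0 _ _ _ hτAtr]

lemma projQ0_add : projQ0 τA τB (ρ + σ) = projQ0 τA τB ρ + projQ0 τA τB σ := by
  rw [← resetA_resetB, resetB_add, resetA_add, resetA_resetB, resetA_resetB]

lemma projQ0_smul (r : ℝ) : projQ0 τA τB (r • ρ) = r • projQ0 τA τB ρ := by
  rw [← resetA_resetB, resetB_smul, resetA_smul, resetA_resetB]

lemma projQ0_sub : projQ0 τA τB (ρ - σ) = projQ0 τA τB ρ - projQ0 τA τB σ := by
  rw [← resetA_resetB, resetB_sub, resetA_sub, resetA_resetB, resetA_resetB]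

lemma resetA_zero : resetA τA (0 : Matrix (A × C × B) (A × C × B) ℂ) = 0 := by
  funext p q; simp [resetA]

end aux

section main
variable {A C B : Type*} [Fintype A] [Fintype B]
variable (τA : Matrix A A ℂ) (τB : Matrix B B ℂ)
variable (γA γB : ℝ)

lemma resetD_projQ0 (hτAtr : τA.trace = 1) (hτBtr : τB.trace = 1)
    (ρ : Matrix (A × C × B) (A × C × B) ℂ) :
    resetD γA γB τA τB (projQ0 τA τB ρ) = 0 := by
  rw [resetD, resetA_projQ0 _ _ _ hτAtr, resetB_projQ0 _ _ _ hτBtr, sub_self,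
    smul_zero, smul_zero, add_zero]

lemma projQ0_resetD (hτAtr : τA.trace = 1) (hτBtr : τB.trace = 1)
    (ρ : Matrix (A × C × B) (A × C × B) ℂ) :
    projQ0 τA τB (resetD γA γB τA τB ρ) = 0 := by
  rw [resetD, projQ0_add, projQ0_smul, projQ0_smul, projQ0_sub, projQ0_sub,
    projQ0_resetA _ _ _ hτAtr, projQ0_resetB _ _ _ hτBtr, sub_self,
    smul_zero, smul_zero, add_zero]

lemma resetD_ker (hτAtr : τA.trace = 1) (hτBtr : τB.trace = 1)
    (hγA : 0 < γA) (hγB : 0 < γB)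
    (ρ : Matrix (A × C × B) (A × C × B) ℂ)
    (h : resetD γA γB τA τB ρ = 0) : ρ = projQ0 τA τB ρ := by
  have hA : resetA τA (resetD γA γB τA τB ρ) = 0 := by rw [h, resetA_zero]
  rw [resetD, resetA_add, resetA_smul, resetA_smul, resetA_sub, resetA_sub,
    resetA_resetA _ _ hτAtr, resetA_resetB, sub_self, smul_zero, zero_add,
    smul_eq_zero] at hA
  have hPA : resetA τA ρ = projQ0 τA τB ρ := by
    rcases hA with h1 | h1
    · exact absurd h1 (ne_of_gt hγB)
    · exact (sub_eq_zero.mp h1).symm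
  have hB : resetB τB (resetD γA γB τA τB ρ) = 0 := by
    rw [h]; funext p q; simp [resetB]
  rw [resetD, resetB_add, resetB_smul, resetB_smul, resetB_sub, resetB_sub,
    resetB_resetB _ _ hτBtr, resetB_resetA, sub_self, smul_zero, add_zero,
    smul_eq_zero] at hB
  have hPB : resetB τB ρ = projQ0 τA τB ρ := by
    rcases hB with h1 | h1
    · exact absurd h1 (ne_of_gt hγA)
    · exact (sub_eq_zero.mp h1).symm
  rw [resetD, hPA, hPB, ← add_smul, smul_eq_zero] at h
  rcases h with h1 | h1
  · exact absurd h1 (ne_of_gt (by positivity))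
  · exact (sub_eq_zero.mp h1).symm

end main

/-- `Q_0(ρ) = τ_A ⊗ tr_{AB}(ρ) ⊗ τ_B` is the spectral projection of the reset dissipator
`D` onto its kernel: `Q_0² = Q_0`, `D∘Q_0 = Q_0∘D = 0`, and `ker D = range Q_0`. -/
theorem stmt10 {A C B : Type*} [Fintype A] [Fintype B] [Fintype C]
    (τA : Matrix A A ℂ) (hτA : τA.PosSemidef) (hτAtr : τA.trace = 1)
    (τB : Matrix B B ℂ) (hτB : τB.PosSemidef) (hτBtr : τB.trace = 1)
    (γA γB : ℝ) (hγA : 0 < γA) (hγB : 0 < γB) :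
    (∀ ρ : Matrix (A × C × B) (A × C × B) ℂ,
      projQ0 τA τB (projQ0 τA τB ρ) = projQ0 τA τB ρ) ∧
    (∀ ρ : Matrix (A × C × B) (A × C × B) ℂ,
      resetD γA γB τA τB (projQ0 τA τB ρ) = 0) ∧
    (∀ ρ : Matrix (A × C × B) (A × C × B) ℂ,
      projQ0 τA τB (resetD γA γB τA τB ρ) = 0) ∧
    (∀ ρ : Matrix (A × C × B) (A × C × B) ℂ,
      resetD γA γB τA τB ρ = 0 ↔ ∃ σ, ρ = projQ0 τA τB σ) := by
  refine ⟨fun ρ => projQ0_projQ0 _ _ _ hτAtr hτBtr,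
    fun ρ => resetD_projQ0 _ _ _ _ hτAtr hτBtr ρ,
    fun ρ => projQ0_resetD _ _ _ _ hτAtr hτBtr ρ,
    fun ρ => ⟨fun h => ⟨ρ, resetD_ker _ _ _ _ hτAtr hτBtr hγA hγB ρ h⟩, ?_⟩⟩
  rintro ⟨σ, rfl⟩
  exact resetD_projQ0 _ _ _ _ hτAtr hτBtr σ
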